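/- arXiv:1103.3890 — 8 statements merged into one kernel-verified Lean document; each statement's English description precedes it below -/
import Mathlib

section
/- Every 'pick a door and never switch' strategy is strictly dominated by a 'pick another door and always switch' strategy: row 2SS dominates row 1NN, row 3SS dominates row 2NN, and row 1SS dominates row 3NN; that is, in each of these three pairs C (dominating row) j ≥ C (dominated row) j for every column j ∈ Fin 6, with strict inequality for at least one column j. -/
/-! Playing `dNN` wins exactly when the prize is behind door `d`, playing `d'SS` exactly when it is
not behind `d'`. For `d ≠ d'` the first event implies the second, and the converse fails when the
prize is behind the third door. -/

open Finset

/-- Contestant's payoff matrix for the Monty Hall zero-sum game.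
Rows: 1SS,1SN,1NS,1NN,2SS,2SN,2NS,2NN,3SS,3SN,3NS,3NN.
Columns: 1L,1R,2L,2R,3L,3R. -/
def C : Fin 12 → Fin 6 → ℝ :=
  ![![0,0,1,1,1,1],
    ![0,1,0,0,1,1],
    ![1,0,1,1,0,0],
    ![1,1,0,0,0,0],
    ![1,1,0,0,1,1],
    ![0,0,0,1,1,1],
    ![1,1,1,0,0,0],
    ![0,0,1,1,0,0],
    ![1,1,1,1,0,0],
    ![0,0,1,1,0,1],
    ![1,1,0,0,1,0],
    ![0,0,0,0,1,1]]

/-- A mixed strategy for Contestant. -/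
def IsMixedC (P : Fin 12 → ℝ) : Prop := (∀ i, 0 ≤ P i) ∧ ∑ i, P i = 1

/-- A mixed strategy for Host. -/
def IsMixedH (Q : Fin 6 → ℝ) : Prop := (∀ j, 0 ≤ Q j) ∧ ∑ j, Q j = 1

/-- Expected payoff (Contestant's winning probability) under profile (P,Q). -/
def E (P : Fin 12 → ℝ) (Q : Fin 6 → ℝ) : ℝ := ∑ i, ∑ j, P i * C i j * Q j

-- The first letter of a Host strategy is the door hiding the prize.
def prizeDoor (j : Fin 6) : Fin 3 := ⟨j / 2, by omega⟩

def alwaysSwitch (d : Fin 3) : Fin 12 := ⟨4 * d, by omega⟩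

def neverSwitch (d : Fin 3) : Fin 12 := ⟨4 * d + 3, by omega⟩

lemma C_alwaysSwitch (d : Fin 3) (j : Fin 6) :
    C (alwaysSwitch d) j = if prizeDoor j = d then 0 else 1 := by
  fin_cases d <;> fin_cases j <;> rfl

lemma C_neverSwitch (d : Fin 3) (j : Fin 6) :
    C (neverSwitch d) j = if prizeDoor j = d then 1 else 0 := by
  fin_cases d <;> fin_cases j <;> rfl

lemma exists_prizeDoor_ne_ne (d d' : Fin 3) : ∃ j, prizeDoor j ≠ d ∧ prizeDoor j ≠ d' := by
  revert d d'
  decide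

theorem C_neverSwitch_lt_C_alwaysSwitch {d d' : Fin 3} (h : d ≠ d') :
    C (neverSwitch d) < C (alwaysSwitch d') := by
  refine Pi.lt_def.mpr ⟨fun j => ?_, ?_⟩
  · rw [C_neverSwitch, C_alwaysSwitch]
    split_ifs <;> simp_all
  · obtain ⟨j, hd, hd'⟩ := exists_prizeDoor_ne_ne d d'
    exact ⟨j, by simp [C_neverSwitch, C_alwaysSwitch, hd, hd']⟩

/-- Each never-switch strategy is strictly dominated by an always-switch strategy:
2SS dominates 1NN, 3SS dominates 2NN, 1SS dominates 3NN. -/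
theorem never_switch_dominated :
    ((∀ j : Fin 6, C 4 j ≥ C 3 j) ∧ (∃ j : Fin 6, C 4 j > C 3 j)) ∧
    ((∀ j : Fin 6, C 8 j ≥ C 7 j) ∧ (∃ j : Fin 6, C 8 j > C 7 j)) ∧
    ((∀ j : Fin 6, C 0 j ≥ C 11 j) ∧ (∃ j : Fin 6, C 0 j > C 11 j)) :=
  ⟨Pi.lt_def.mp (C_neverSwitch_lt_C_alwaysSwitch (d := 0) (d' := 1) (by decide)),
    Pi.lt_def.mp (C_neverSwitch_lt_C_alwaysSwitch (d := 1) (d' := 2) (by decide)),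
    Pi.lt_def.mp (C_neverSwitch_lt_C_alwaysSwitch (d := 2) (d' := 0) (by decide))⟩
end

section
/- The strategy P* (uniform mixture of 1SS, 2SS, 3SS) equalizes the game: for every mixed strategy Q of Host, E(P*, Q) = 2/3. -/
open Finset

/-- Contestant's minimax strategy: the uniform mixture of 1SS, 2SS, 3SS. -/
noncomputable def Pstar : Fin 12 → ℝ := ![1/3, 0, 0, 0, 1/3, 0, 0, 0, 1/3, 0, 0, 0]

theorem E_eq_sum_columns (P : Fin 12 → ℝ) (Q : Fin 6 → ℝ) :
    E P Q = ∑ j, (∑ i, P i * C i j) * Q j := by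
  simp only [E, sum_mul]
  exact sum_comm

theorem E_eq_of_column_payoffs_eq {P : Fin 12 → ℝ} {v : ℝ} (hP : ∀ j, ∑ i, P i * C i j = v)
    {Q : Fin 6 → ℝ} (hQ : IsMixedH Q) : E P Q = v := by
  rw [E_eq_sum_columns]
  simp only [hP, ← mul_sum, hQ.2, mul_one]

/-- Always switching wins exactly when the first pick misses the prize door, which happens for
two of the three first picks. -/
theorem C_SS_rows_add (j : Fin 6) : C 0 j + C 4 j + C 8 j = 2 := by
  fin_cases j <;> simp [C] <;> norm_num

theorem Pstar_column_payoff (j : Fin 6) : ∑ i, Pstar i * C i j = 2 / 3 := by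
  simp only [Pstar, Fin.sum_univ_succ, Fin.sum_univ_zero, Matrix.cons_val_zero,
    Matrix.cons_val_succ, Matrix.cons_val_fin_one, zero_mul, add_zero, zero_add, Fin.reduceSucc]
  linarith [C_SS_rows_add j]

/-- P* equalizes the game: against every mixed strategy of Host the
expected payoff is 2/3. -/
theorem Pstar_equalizes :
    ∀ Q : Fin 6 → ℝ, IsMixedH Q → E Pstar Q = 2/3 :=
  fun _ hQ => E_eq_of_column_payoffs_eq Pstar_column_payoff hQ
end

section
/- For all λ₁, λ₂, λ₃ ∈ [0,1], the Host strategy Q*_{λ₁,λ₂,λ₃} = (λ₁/3, (1−λ₁)/3, λ₂/3, (1−λ₂)/3, λ₃/3, (1−λ₃)/3) is a minimax strategy: for every mixed strategy P of Contestant, E(P, Q*_{λ₁,λ₂,λ₃}) ≤ 2/3. -/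
open Finset

/-!
`E P Q` is the `P`-average of the pure-strategy payoffs `∑ j, C i j * Q j`, so it suffices to
bound each row of `C` against `Q*`. Now `Q*` gives the two columns of each door total weight
`1/3`, and every row of `C` vanishes on both columns of some door, so no row pays more than `2/3`.
-/

theorem weighted_sum_le_of_forall_le {ι : Type*} [Fintype ι] {w f : ι → ℝ} {v : ℝ}
    (hw : ∀ i, 0 ≤ w i) (hw₁ : ∑ i, w i = 1) (hf : ∀ i, f i ≤ v) : ∑ i, w i * f i ≤ v :=
  calc ∑ i, w i * f i ≤ ∑ i, w i * v :=
        sum_le_sum fun i _ => mul_le_mul_of_nonneg_left (hf i) (hw i)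
    _ = v := by rw [← sum_mul, hw₁, one_mul]

theorem E_eq_sum_mul_row (P : Fin 12 → ℝ) (Q : Fin 6 → ℝ) :
    E P Q = ∑ i, P i * ∑ j, C i j * Q j := by
  simp only [E, mul_sum, mul_assoc]

theorem E_le_of_forall_row_le {P : Fin 12 → ℝ} (hP : IsMixedC P) {Q : Fin 6 → ℝ} {v : ℝ}
    (hrow : ∀ i, ∑ j, C i j * Q j ≤ v) : E P Q ≤ v :=
  E_eq_sum_mul_row P Q ▸ weighted_sum_le_of_forall_le hP.1 hP.2 hrow

noncomputable def Qstar (l₁ l₂ l₃ : ℝ) : Fin 6 → ℝ :=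
  ![l₁/3, (1 - l₁)/3, l₂/3, (1 - l₂)/3, l₃/3, (1 - l₃)/3]

theorem row_payoff_Qstar_le {l₁ l₂ l₃ : ℝ} (h₁ : l₁ ∈ Set.Icc (0:ℝ) 1)
    (h₂ : l₂ ∈ Set.Icc (0:ℝ) 1) (h₃ : l₃ ∈ Set.Icc (0:ℝ) 1) (i : Fin 12) :
    ∑ j, C i j * Qstar l₁ l₂ l₃ j ≤ 2/3 := by
  obtain ⟨_, _⟩ := h₁
  obtain ⟨_, _⟩ := h₂
  obtain ⟨_, _⟩ := h₃
  fin_cases i <;> simp [C, Qstar, Fin.sum_univ_succ] <;> linarith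

/-- Every Host strategy Q*_{λ₁,λ₂,λ₃} with 0 ≤ λ_X ≤ 1 is minimax:
the expected payoff against any Contestant mixed strategy is at most 2/3. -/
theorem Qstar_lambda_minimax :
    ∀ l₁ l₂ l₃ : ℝ, l₁ ∈ Set.Icc (0:ℝ) 1 → l₂ ∈ Set.Icc (0:ℝ) 1 →
      l₃ ∈ Set.Icc (0:ℝ) 1 →
      ∀ P : Fin 12 → ℝ, IsMixedC P →
        E P ![l₁/3, (1 - l₁)/3, l₂/3, (1 - l₂)/3, l₃/3, (1 - l₃)/3] ≤ 2/3 :=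
  fun _ _ _ h₁ h₂ h₃ _ hP => E_le_of_forall_row_le hP (row_payoff_Qstar_le h₁ h₂ h₃)
end

section
/- Uniqueness of Contestant's minimax strategy: if P is a mixed strategy of Contestant such that E(P, Q) ≥ 2/3 for every mixed strategy Q of Host, then P = P*, the uniform mixture of 1SS, 2SS, 3SS. -/
open Finset

/-! Every row of `C` sums to at most 4, with equality exactly at the rows 1SS, 2SS, 3SS. Adding
the guarantees `2/3` against the six pure Host strategies gives `4 ≤ ∑ i, P i * (row sum i) ≤ 4`,
so `P` lives on the SS rows. Each of the columns 1L, 2L, 3L pays off on exactly two SS rows, so the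
weight of every SS row is at most `1 - 2/3 = 1/3`; as the three weights sum to 1, each is `1/3`. -/

theorem eq_zero_of_le_sum_mul {ι : Type*} [Fintype ι] {P r : ι → ℝ} {M : ℝ}
    (hP : ∀ i, 0 ≤ P i) (hr : ∀ i, r i ≤ M) (h : M * ∑ i, P i ≤ ∑ i, P i * r i)
    {i : ι} (hi : r i < M) : P i = 0 := by
  have hterm : ∀ k ∈ univ, 0 ≤ P k * (M - r k) := fun k _ =>
    mul_nonneg (hP k) (sub_nonneg.2 (hr k))
  have hsum : ∑ k, P k * (M - r k) = 0 := by
    refine le_antisymm ?_ (sum_nonneg hterm)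
    simp only [mul_sub, sum_sub_distrib, ← sum_mul]
    linarith [mul_comm M (∑ k, P k)]
  have := (sum_eq_zero_iff_of_nonneg hterm).1 hsum i (mem_univ i)
  exact (mul_eq_zero.1 this).resolve_right (sub_pos.2 hi).ne'

lemma isMixedH_single (j : Fin 6) : IsMixedH (Pi.single j 1) :=
  ⟨fun k => by by_cases h : k = j <;> simp [h], by simp⟩

lemma E_single (P : Fin 12 → ℝ) (j : Fin 6) : E P (Pi.single j 1) = ∑ i, P i * C i j := by
  simp [E, Pi.single_apply]

lemma sum_E_single (P : Fin 12 → ℝ) :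
    ∑ j, E P (Pi.single j 1) = ∑ i, P i * ∑ j, C i j := by
  simp only [E_single, mul_sum]
  exact sum_comm

lemma sum_C_row_le (i : Fin 12) : ∑ j, C i j ≤ 4 := by
  fin_cases i <;> norm_num [C, Fin.sum_univ_succ]

lemma sum_C_row_lt (i : Fin 12) (hi : i ≠ 0 ∧ i ≠ 4 ∧ i ≠ 8) : ∑ j, C i j < 4 := by
  fin_cases i <;> simp [C, Fin.sum_univ_succ] at hi ⊢ <;> norm_num

/-- Uniqueness of Contestant's minimax strategy: any mixed strategy
guaranteeing 2/3 against every Host strategy is P*. -/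
theorem Pstar_unique_minimax :
    ∀ P : Fin 12 → ℝ, IsMixedC P →
      (∀ Q : Fin 6 → ℝ, IsMixedH Q → E P Q ≥ 2/3) → P = Pstar := by
  rintro P ⟨hP, hP_sum⟩ h
  have hpure (j : Fin 6) : 2 / 3 ≤ E P (Pi.single j 1) := h _ (isMixedH_single j)
  have hoff : ∀ i, i ≠ 0 ∧ i ≠ 4 ∧ i ≠ 8 → P i = 0 := by
    refine fun i hi => eq_zero_of_le_sum_mul hP sum_C_row_le ?_ (sum_C_row_lt i hi)
    calc 4 * ∑ i, P i = ∑ _j : Fin 6, (2 / 3 : ℝ) := by norm_num [hP_sum]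
      _ ≤ ∑ j, E P (Pi.single j 1) := sum_le_sum fun j _ => hpure j
      _ = ∑ i, P i * ∑ j, C i j := sum_E_single P
  have hSS : P 0 + P 4 + P 8 = 1 := by simpa [Fin.sum_univ_succ, hoff, add_assoc] using hP_sum
  have h1L : 2 / 3 ≤ P 4 + P 8 := by simpa [E_single, C, Fin.sum_univ_succ, hoff] using hpure 0
  have h2L : 2 / 3 ≤ P 0 + P 8 := by simpa [E_single, C, Fin.sum_univ_succ, hoff] using hpure 2
  have h3L : 2 / 3 ≤ P 0 + P 4 := by simpa [E_single, C, Fin.sum_univ_succ, hoff] using hpure 4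
  have h0 : P 0 = 1 / 3 := by linarith
  have h4 : P 4 = 1 / 3 := by linarith
  have h8 : P 8 = 1 / 3 := by linarith
  funext i
  fin_cases i <;> simp [Pstar, hoff, h0, h4, h8]
end

section
/- Best response value (Proposition): let Q be a mixed strategy of Host and let π₁ = Q 0 + Q 1, π₂ = Q 2 + Q 3, π₃ = Q 4 + Q 5 be the probabilities that the car is hidden behind doors 1, 2, 3. Then the maximum of E(P, Q) over all mixed strategies P of Contestant equals 1 − min(π₁, π₂, π₃); that is, E(P, Q) ≤ 1 − min(π₁, π₂, π₃) for every mixed strategy P, and there exists a mixed strategy P with E(P, Q) = 1 − min(π₁, π₂, π₃). -/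
open Finset

/-!
Against a fixed `Q`, `E P Q` is the `P`-average of the payoffs `(C *ᵥ Q) i` of the pure
strategies, so the best response value is the largest of these. Every pure strategy loses
outright when the car is behind some door `d` (its row of `C` vanishes on both columns of `d`),
so its payoff is at most `1 - π_d`. Conversely, choosing door `d` and always switching wins exactly when the car is
not behind `d`, which gives `1 - π_d` for the least likely door.
-/

open Matrix

section MixedStrategy

variable {ι : Type*} [Fintype ι]

theorem dotProduct_le_of_forall_le {p v : ι → ℝ} {c : ℝ} (hp : ∀ i, 0 ≤ p i)
    (hp_sum : ∑ i, p i = 1) (hv : ∀ i, v i ≤ c) : p ⬝ᵥ v ≤ c :=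
  calc p ⬝ᵥ v = ∑ i, p i * v i := rfl
    _ ≤ ∑ i, p i * c := sum_le_sum fun i _ => mul_le_mul_of_nonneg_left (hv i) (hp i)
    _ = c := by rw [← sum_mul, hp_sum, one_mul]

theorem dotProduct_le_one_sub_sum_of_eq_zero [DecidableEq ι] {r q : ι → ℝ} {s : Finset ι}
    (hq : ∀ j, 0 ≤ q j) (hq_sum : ∑ j, q j = 1) (hr : ∀ j, r j ≤ 1) (hs : ∀ j ∈ s, r j = 0) :
    r ⬝ᵥ q ≤ 1 - ∑ j ∈ s, q j := by
  have hzero : ∑ j ∈ s, r j * q j = 0 := sum_eq_zero fun j hj => by rw [hs j hj, zero_mul]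
  calc r ⬝ᵥ q = ∑ j ∈ sᶜ, r j * q j := by
        rw [dotProduct, ← sum_add_sum_compl s, hzero, zero_add]
    _ ≤ ∑ j ∈ sᶜ, q j := sum_le_sum fun j _ => mul_le_of_le_one_left (hq j) (hr j)
    _ = 1 - ∑ j ∈ s, q j := by rw [← hq_sum, ← sum_add_sum_compl s]; ring

end MixedStrategy

def minDoorProb (Q : Fin 6 → ℝ) : ℝ := min (min (Q 0 + Q 1) (Q 2 + Q 3)) (Q 4 + Q 5)

theorem E_eq_dotProduct_mulVec (P : Fin 12 → ℝ) (Q : Fin 6 → ℝ) : E P Q = P ⬝ᵥ (C *ᵥ Q) := by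
  simp only [E, dotProduct, mulVec, mul_sum, mul_assoc]

theorem C_le_one (i : Fin 12) (j : Fin 6) : C i j ≤ 1 := by
  fin_cases i <;> fin_cases j <;> norm_num [C]

theorem C_eq_zero_on_some_door (i : Fin 12) :
    (C i 0 = 0 ∧ C i 1 = 0) ∨ (C i 2 = 0 ∧ C i 3 = 0) ∨ (C i 4 = 0 ∧ C i 5 = 0) := by
  fin_cases i <;> simp [C]

theorem minDoorProb_le (Q : Fin 6 → ℝ) :
    minDoorProb Q ≤ Q 0 + Q 1 ∧ minDoorProb Q ≤ Q 2 + Q 3 ∧ minDoorProb Q ≤ Q 4 + Q 5 :=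
  ⟨(min_le_left _ _).trans (min_le_left _ _), (min_le_left _ _).trans (min_le_right _ _),
    min_le_right _ _⟩

theorem mulVec_C_le {Q : Fin 6 → ℝ} (hQ : IsMixedH Q) (i : Fin 12) :
    (C *ᵥ Q) i ≤ 1 - minDoorProb Q := by
  have losing_door (a b : Fin 6) (hab : a ≠ b) (ha : C i a = 0) (hb : C i b = 0)
      (hmin : minDoorProb Q ≤ Q a + Q b) : (C *ᵥ Q) i ≤ 1 - minDoorProb Q := by
    refine le_trans ?_ (sub_le_sub_left hmin 1)
    rw [← sum_pair hab]
    exact dotProduct_le_one_sub_sum_of_eq_zero hQ.1 hQ.2 (C_le_one i) (by simp [ha, hb])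
  obtain ⟨h01, h23, h45⟩ := minDoorProb_le Q
  rcases C_eq_zero_on_some_door i with ⟨ha, hb⟩ | ⟨ha, hb⟩ | ⟨ha, hb⟩
  · exact losing_door 0 1 (by decide) ha hb h01
  · exact losing_door 2 3 (by decide) ha hb h23
  · exact losing_door 4 5 (by decide) ha hb h45

theorem E_single_s9 (k : Fin 12) (Q : Fin 6 → ℝ) : E (Pi.single k 1) Q = (C *ᵥ Q) k := by
  rw [E_eq_dotProduct_mulVec, single_one_dotProduct]

theorem isMixedC_single (k : Fin 12) : IsMixedC (Pi.single k 1) :=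
  ⟨fun i => by by_cases h : i = k <;> simp [h], by simp⟩

theorem mulVec_C_always_switch (Q : Fin 6 → ℝ) :
    (C *ᵥ Q) 0 = Q 2 + Q 3 + Q 4 + Q 5 ∧ (C *ᵥ Q) 4 = Q 0 + Q 1 + Q 4 + Q 5 ∧
      (C *ᵥ Q) 8 = Q 0 + Q 1 + Q 2 + Q 3 := by
  refine ⟨?_, ?_, ?_⟩ <;> simp [C, mulVec, dotProduct, Fin.sum_univ_six]

theorem exists_mulVec_C_eq {Q : Fin 6 → ℝ} (hQ : IsMixedH Q) :
    ∃ k, (C *ᵥ Q) k = 1 - minDoorProb Q := by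
  have hsum := hQ.2
  rw [Fin.sum_univ_six] at hsum
  obtain ⟨h0, h4, h8⟩ := mulVec_C_always_switch Q
  unfold minDoorProb
  rcases min_choice (min (Q 0 + Q 1) (Q 2 + Q 3)) (Q 4 + Q 5) with h | h <;> rw [h]
  · rcases min_choice (Q 0 + Q 1) (Q 2 + Q 3) with h' | h' <;> rw [h']
    · exact ⟨0, by linarith⟩
    · exact ⟨4, by linarith⟩
  · exact ⟨8, by linarith⟩

/-- Best response value: the maximal winning probability against Host's Q
equals 1 − min(π₁, π₂, π₃), where π_X is the probability of door X hiding the car. -/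
theorem best_response_value :
    ∀ Q : Fin 6 → ℝ, IsMixedH Q →
      (∀ P : Fin 12 → ℝ, IsMixedC P →
        E P Q ≤ 1 - min (min (Q 0 + Q 1) (Q 2 + Q 3)) (Q 4 + Q 5)) ∧
      (∃ P : Fin 12 → ℝ, IsMixedC P ∧
        E P Q = 1 - min (min (Q 0 + Q 1) (Q 2 + Q 3)) (Q 4 + Q 5)) := by
  intro Q hQ
  refine ⟨fun P hP => ?_, ?_⟩
  · rw [E_eq_dotProduct_mulVec]
    exact dotProduct_le_of_forall_le hP.1 hP.2 (mulVec_C_le hQ)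
  · obtain ⟨k, hk⟩ := exists_mulVec_C_eq hQ
    exact ⟨Pi.single k 1, isMixedC_single k, (E_single_s9 k Q).trans hk⟩
end

section
/- Never-switch strategies are never best responses: let Q be a mixed strategy of Host with π₁ = Q 0 + Q 1 > 0, π₂ = Q 2 + Q 3 > 0, and π₃ = Q 4 + Q 5 > 0. Then every best response P to Q satisfies P 3 = P 7 = P 11 = 0 (the strategies 1NN, 2NN, 3NN have zero probability). -/
/-! Against `Q`, the never-switch strategy 1NN wins only when the car is behind door 1 and 2NN
only when it is behind door 2, whereas 3SS wins in both cases; 3NN wins only behind door 3,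
whereas 1SS wins behind doors 2 and 3. Each never-switch strategy is therefore strictly beaten
by a pure strategy, and shifting its weight onto that strategy would strictly improve any
mixed strategy that uses it. -/

open Finset

def pureE (i : Fin 12) (Q : Fin 6 → ℝ) : ℝ := ∑ j, C i j * Q j

lemma E_eq_sum_mul_pureE (P : Fin 12 → ℝ) (Q : Fin 6 → ℝ) :
    E P Q = ∑ i, P i * pureE i Q := by
  simp only [E, pureE, mul_sum, mul_assoc]

/-- Moving the weight of `i` onto the strictly better pure strategy `k` raises the payoff by
`P i * (u k - u i)`. -/
lemma eq_zero_of_isMaxOn_stdSimplex_of_lt {ι : Type*} [Fintype ι] [DecidableEq ι]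
    {u P : ι → ℝ} (hP : P ∈ stdSimplex ℝ ι)
    (hmax : IsMaxOn (fun x : ι → ℝ => ∑ j, x j * u j) (stdSimplex ℝ ι) P)
    {i k : ι} (hlt : u i < u k) : P i = 0 := by
  have hik : i ≠ k := hlt.ne ∘ congrArg u
  set P' : ι → ℝ := P + P i • (Pi.single k 1 - Pi.single i 1)
  have hP' : P' ∈ stdSimplex ℝ ι := by
    refine ⟨fun j => ?_, ?_⟩
    · rcases eq_or_ne j i with rfl | hj
      · simp [P', hik]
      · have := hP.1 i
        have := hP.1 j
        simp only [P', Pi.add_apply, Pi.smul_apply, Pi.sub_apply, Pi.single_apply, if_neg hj,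
          smul_eq_mul, sub_zero]
        split_ifs <;> positivity
    · simp [P', sum_add_distrib, ← mul_sum, hP.2]
  have hgain : ∑ j, P' j * u j = ∑ j, P j * u j + P i * (u k - u i) := by
    simp [P', add_mul, sub_mul, sum_add_distrib, Pi.single_apply, mul_assoc, ite_mul,
      ← mul_sum]
  have hnonpos : P i * (u k - u i) ≤ 0 := by linarith [isMaxOn_iff.1 hmax P' hP']
  exact le_antisymm (nonpos_of_mul_nonpos_left hnonpos (sub_pos.2 hlt)) (hP.1 i)

/-- If every door hides the car with positive probability, then no best
response uses a never-switch strategy (1NN, 2NN, 3NN). -/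
theorem never_switch_never_best_response :
    ∀ (Q : Fin 6 → ℝ) (P : Fin 12 → ℝ), IsMixedH Q → IsMixedC P →
      Q 0 + Q 1 > 0 → Q 2 + Q 3 > 0 → Q 4 + Q 5 > 0 →
      (∀ P' : Fin 12 → ℝ, IsMixedC P' → E P Q ≥ E P' Q) →
      P 3 = 0 ∧ P 7 = 0 ∧ P 11 = 0 := by
  intro Q P _ hP h1 h2 _ hbest
  have hmax : IsMaxOn (fun x : Fin 12 → ℝ => ∑ i, x i * pureE i Q) (stdSimplex ℝ (Fin 12)) P :=
    isMaxOn_iff.2 fun P' hP' => by simpa only [E_eq_sum_mul_pureE] using hbest P' hP'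
  have h1NN : pureE 3 Q < pureE 8 Q := by simp [pureE, C, Fin.sum_univ_six]; linarith
  have h2NN : pureE 7 Q < pureE 8 Q := by simp [pureE, C, Fin.sum_univ_six]; linarith
  have h3NN : pureE 11 Q < pureE 0 Q := by simp [pureE, C, Fin.sum_univ_six]; linarith
  exact ⟨eq_zero_of_isMaxOn_stdSimplex_of_lt hP hmax h1NN,
    eq_zero_of_isMaxOn_stdSimplex_of_lt hP hmax h2NN,
    eq_zero_of_isMaxOn_stdSimplex_of_lt hP hmax h3NN⟩
end

section
/- Best responses to a fully supported Host strategy use only always-switch strategies: let Q be a mixed strategy of Host with Q j > 0 for all j ∈ Fin 6. Then every best response P to Q satisfies P i = 0 for all i ∉ {0, 4, 8}; that is, P is a mixture of 1SS, 2SS, 3SS. -/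
open Finset

/-! Against a Host strategy giving every column positive weight, a row that is weakly dominated,
strictly in some column, earns strictly less than its dominator, so a best response puts no
weight on it: moving that weight to the dominating row would gain. Every row other than
1SS, 2SS, 3SS is dominated in this way by one of them. -/

open Matrix

section

variable {R ι κ : Type*} [CommRing R] [LinearOrder R] [IsStrictOrderedRing R] [Fintype ι]

theorem dotProduct_lt_dotProduct_of_lt_of_pos [Fintype κ] {u v w : κ → R} (huv : u < v)
    (hw : ∀ j, 0 < w j) : u ⬝ᵥ w < v ⬝ᵥ w := by
  obtain ⟨hle, j, hlt⟩ := Pi.lt_def.1 huv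
  exact Finset.sum_lt_sum (fun k _ => mul_le_mul_of_nonneg_right (hle k) (hw k).le)
    ⟨j, Finset.mem_univ j, mul_lt_mul_of_pos_right hlt (hw j)⟩

theorem eq_zero_of_isMaxOn_dotProduct_of_lt {w P : ι → R}
    (hP : P ∈ stdSimplex R ι) (hmax : IsMaxOn (· ⬝ᵥ w) (stdSimplex R ι) P) {i d : ι}
    (hid : w i < w d) : P i = 0 := by
  classical
  have hne : i ≠ d := ne_of_apply_ne w hid.ne
  by_contra h
  have hi : 0 < P i := (hP.1 i).lt_of_ne' h
  set P' := P + P i • (Pi.single d 1 - Pi.single i 1) with hP'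
  have hmem : P' ∈ stdSimplex R ι := by
    refine ⟨fun k => ?_, ?_⟩
    · have hPk := hP.1 k
      rcases eq_or_ne k i with rfl | hki
      · simp [hP', hne]
      rcases eq_or_ne k d with rfl | hkd
      · simpa [hP', hki] using add_nonneg hPk hi.le
      · simpa [hP', hki, hkd] using hPk
    · simp [hP', Finset.sum_add_distrib, ← Finset.mul_sum, hP.2]
  have hval : P' ⬝ᵥ w = P ⬝ᵥ w + P i * (w d - w i) := by
    simp [hP', add_dotProduct, sub_dotProduct]
  have hle := isMaxOn_iff.1 hmax P' hmem
  linarith [mul_pos hi (sub_pos.2 hid)]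

end

theorem C_dominated_of_not_always_switch (i : Fin 12) (hi : i ∉ ({0, 4, 8} : Set (Fin 12))) :
    ∃ d, C i < C d := by
  refine ⟨![0, 4, 8, 4, 4, 0, 8, 0, 8, 0, 4, 4] i, ?_⟩
  revert hi
  fin_cases i <;> simp [Pi.lt_def, Pi.le_def, C, Fin.forall_fin_succ, Fin.exists_fin_succ, Matrix.cons_val]

/-- Best responses to a fully supported Host strategy are mixtures of the
always-switch strategies 1SS, 2SS, 3SS (rows 0, 4, 8). -/
theorem best_response_fully_supported :
    ∀ (Q : Fin 6 → ℝ) (P : Fin 12 → ℝ), IsMixedH Q → IsMixedC P →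
      (∀ j : Fin 6, Q j > 0) →
      (∀ P' : Fin 12 → ℝ, IsMixedC P' → E P Q ≥ E P' Q) →
      ∀ i : Fin 12, i ∉ ({0, 4, 8} : Set (Fin 12)) → P i = 0 := by
  intro Q P _ hP hQ hbest i hi
  obtain ⟨d, hd⟩ := C_dominated_of_not_always_switch i hi
  have hmax : IsMaxOn (· ⬝ᵥ (C *ᵥ Q)) (stdSimplex ℝ (Fin 12)) P := isMaxOn_iff.2 fun P' hP' => by
    simpa only [E_eq_dotProduct_mulVec] using hbest P' hP'
  exact eq_zero_of_isMaxOn_dotProduct_of_lt hP hmax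
    (dotProduct_lt_dotProduct_of_lt_of_pos hd hQ)
end

section
/- Two tied minimizing doors: let Q be a fully supported mixed strategy of Host (Q j > 0 for all j) with π₁ = Q 0 + Q 1, π₂ = Q 2 + Q 3, π₃ = Q 4 + Q 5. If π₁ > π₂ and π₂ = π₃, then every best response P to Q is a mixture of 2SS and 3SS, i.e. P i = 0 for all i ∉ {4, 8}. -/
open Finset

/-! Moving the weight of a pure strategy onto one that does strictly better against Q stays in the
simplex and strictly raises the expected payoff, so a best response ignores every row beaten by
another. Here 2SS and 3SS both win with probability π₁ + π₃ = π₁ + π₂, and every other row wins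
strictly less often. -/

open Matrix

section BestResponse

variable {𝕜 ι : Type*} [CommRing 𝕜] [LinearOrder 𝕜] [IsStrictOrderedRing 𝕜]
  [Fintype ι] [DecidableEq ι]

theorem IsMaxOn.eq_zero_of_lt_stdSimplex {v P : ι → 𝕜}
    (hmax : IsMaxOn (· ⬝ᵥ v) (stdSimplex 𝕜 ι) P) (hP : P ∈ stdSimplex 𝕜 ι) {i k : ι}
    (hlt : v i < v k) : P i = 0 := by
  have hik : i ≠ k := by rintro rfl; exact hlt.false
  set P' := P + P i • (Pi.single k 1 - Pi.single i 1)
  have hP' : P' ∈ stdSimplex 𝕜 ι := by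
    refine ⟨fun j => ?_, ?_⟩
    · have hPi := hP.1 i
      have hPj := hP.1 j
      rcases eq_or_ne j i with rfl | hji
      · simp [P', hik.symm]
      · by_cases hjk : j = k
        · subst hjk
          simpa [P', hji] using add_nonneg hPj hPi
        · simpa [P', hji, hjk]
    · simp [P', sum_add_distrib, ← mul_sum, sum_sub_distrib, hP.2]
  have hgain : P' ⬝ᵥ v = P ⬝ᵥ v + P i * (v k - v i) := by
    simp [P', add_dotProduct, sub_dotProduct, single_dotProduct, mul_sub]
  have hloss : P i * (v k - v i) ≤ 0 := by
    have := hmax hP'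
    simp only [Set.mem_ofPred_eq, hgain] at this
    linarith
  exact le_antisymm (nonpos_of_mul_nonpos_left hloss (sub_pos.2 hlt)) (hP.1 i)

end BestResponse

theorem C_mulVec_lt_C_mulVec_four {Q : Fin 6 → ℝ} (hQ : ∀ j, 0 < Q j)
    (h12 : Q 2 + Q 3 < Q 0 + Q 1) (h23 : Q 2 + Q 3 = Q 4 + Q 5) :
    ∀ i ∉ ({4, 8} : Set (Fin 12)), (C *ᵥ Q) i < (C *ᵥ Q) 4 := by
  have := hQ 0; have := hQ 1; have := hQ 2; have := hQ 3; have := hQ 4; have := hQ 5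
  intro i hi
  fin_cases i <;> simp [mulVec, dotProduct, C, Fin.sum_univ_succ] at hi ⊢ <;> linarith

/-- If doors 2 and 3 are tied as least likely under a fully supported Q, then
every best response is a mixture of 2SS and 3SS (rows 4 and 8). -/
theorem tied_min_doors_best_response :
    ∀ (Q : Fin 6 → ℝ) (P : Fin 12 → ℝ), IsMixedH Q → IsMixedC P →
      (∀ j : Fin 6, Q j > 0) →
      Q 0 + Q 1 > Q 2 + Q 3 → Q 2 + Q 3 = Q 4 + Q 5 →
      (∀ P' : Fin 12 → ℝ, IsMixedC P' → E P Q ≥ E P' Q) →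
      ∀ i : Fin 12, i ∉ ({4, 8} : Set (Fin 12)) → P i = 0 := by
  intro Q P _ hP hQ h12 h23 hbest i hi
  have hmax : IsMaxOn (· ⬝ᵥ (C *ᵥ Q)) (stdSimplex ℝ (Fin 12)) P := fun P' hP' => by
    simpa only [Set.mem_ofPred_eq, E_eq_dotProduct_mulVec] using hbest P' hP'
  exact hmax.eq_zero_of_lt_stdSimplex hP (C_mulVec_lt_C_mulVec_four hQ h12 h23 i hi)
end
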